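/- arXiv:1905.05639 — 4 statements merged into one kernel-verified Lean document; each statement's English description precedes it below -/
import Mathlib

section
/- Let M ≥ 1 and G ≥ 2 be integers. Fix a group index g, a channel estimate ĥ ∈ ℂ^M, a noise power σ > 0, an SINR target τ ≥ 0, and a Hermitian positive definite matrix C ∈ ℂ^{M×M}; set ε = 1/√(λ_min(C)), where λ_min(C) is the smallest eigenvalue of C. Let w_1,…,w_G ∈ ℂ^M be beamforming vectors. If ε‖w_g‖₂ + √τ · √( Σ_{l≠g} ( |w_l^H ĥ| + ε‖w_l‖₂ )² + σ² ) ≤ |w_g^H ĥ|, then for every error vector e ∈ ℂ^M with e^H C e ≤ 1 one has |w_g^H (ĥ + e)|² ≥ τ · ( Σ_{l≠g} |w_l^H (ĥ + e)|² + σ² ). -/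
/-!
On the ellipsoid `eᴴ C e ≤ 1` one has `λ_min(C) ‖e‖² ≤ eᴴ C e ≤ 1`, so `‖e‖ ≤ ε`, and by
Cauchy–Schwarz every `|w_lᴴ(ĥ + e)|` differs from `|w_lᴴ ĥ|` by at most `ε ‖w_l‖`. Bounding the
interference terms from above and the signal term from below in this way, the conservative
constraint gives `√τ · √(interference + noise) ≤ |w_gᴴ(ĥ + e)|`; squaring finishes.
-/

open scoped InnerProductSpace ComplexInnerProductSpace ComplexOrder

namespace Matrix

variable {𝕜 n : Type*} [RCLike 𝕜] [Fintype n] [DecidableEq n] {A : Matrix n n 𝕜}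

lemma IsHermitian.toEuclideanLin_eigenvectorBasis (hA : A.IsHermitian) (j : n) :
    toEuclideanLin A (hA.eigenvectorBasis j) =
      (hA.eigenvalues j : 𝕜) • hA.eigenvectorBasis j := by
  ext i
  simpa [toLpLin_apply] using congrFun (hA.mulVec_eigenvectorBasis j) i

lemma IsHermitian.re_inner_toEuclideanLin_eq_sum (hA : A.IsHermitian) (x : EuclideanSpace 𝕜 n) :
    RCLike.re ⟪x, toEuclideanLin A x⟫_𝕜 =
      ∑ i, hA.eigenvalues i * ‖⟪hA.eigenvectorBasis i, x⟫_𝕜‖ ^ 2 := by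
  set b := hA.eigenvectorBasis
  rw [← b.sum_inner_mul_inner, map_sum]
  refine Finset.sum_congr rfl fun i _ => ?_
  rw [← (isSymmetric_toEuclideanLin_iff.mpr hA), hA.toEuclideanLin_eigenvectorBasis,
    inner_smul_left, RCLike.conj_ofReal, mul_left_comm, RCLike.re_ofReal_mul,
    inner_mul_symm_re_eq_norm, ← inner_conj_symm x, norm_mul, RCLike.norm_conj, sq]

lemma IsHermitian.iInf_eigenvalues_mul_sq_norm_le (hA : A.IsHermitian) (x : EuclideanSpace 𝕜 n) :
    (⨅ i, hA.eigenvalues i) * ‖x‖ ^ 2 ≤ RCLike.re ⟪x, toEuclideanLin A x⟫_𝕜 := by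
  rw [hA.re_inner_toEuclideanLin_eq_sum, ← hA.eigenvectorBasis.sum_sq_norm_inner_right,
    Finset.mul_sum]
  gcongr with i
  exact ciInf_le (Finite.bddBelow_range _) i

lemma PosDef.norm_le_of_re_inner_toEuclideanLin_le_one (hA : A.PosDef)
    {x : EuclideanSpace 𝕜 n} (hx : RCLike.re ⟪x, toEuclideanLin A x⟫_𝕜 ≤ 1) :
    ‖x‖ ≤ 1 / √(⨅ i, hA.isHermitian.eigenvalues i) := by
  rcases isEmpty_or_nonempty n with hn | hn
  · simp [Subsingleton.elim x 0]
  have hpos : 0 < ⨅ i, hA.isHermitian.eigenvalues i := by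
    obtain ⟨j, hj⟩ := exists_eq_ciInf_of_finite (f := hA.isHermitian.eigenvalues)
    exact hj ▸ hA.eigenvalues_pos j
  rw [le_div_iff₀ (Real.sqrt_pos.mpr hpos), ← Real.sqrt_sq (norm_nonneg x), ← Real.sqrt_mul
    (sq_nonneg _), mul_comm, Real.sqrt_le_one]
  exact (hA.isHermitian.iInf_eigenvalues_mul_sq_norm_le x).trans hx

end Matrix

section RobustSINR

variable {𝕜 E : Type*} [RCLike 𝕜] [NormedAddCommGroup E] [InnerProductSpace 𝕜 E]

lemma norm_inner_le_mul_of_norm_le (w : E) {e : E} {ε : ℝ} (he : ‖e‖ ≤ ε) :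
    ‖⟪w, e⟫_𝕜‖ ≤ ε * ‖w‖ :=
  calc ‖⟪w, e⟫_𝕜‖ ≤ ‖w‖ * ‖e‖ := norm_inner_le_norm w e
    _ ≤ ε * ‖w‖ := by rw [mul_comm]; gcongr

lemma norm_inner_add_le_of_norm_le (w h : E) {e : E} {ε : ℝ} (he : ‖e‖ ≤ ε) :
    ‖⟪w, h + e⟫_𝕜‖ ≤ ‖⟪w, h⟫_𝕜‖ + ε * ‖w‖ := by
  rw [inner_add_right]
  exact (norm_add_le _ _).trans (by gcongr; exact norm_inner_le_mul_of_norm_le w he)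

lemma norm_inner_sub_le_norm_inner_add_of_norm_le (w h : E) {e : E} {ε : ℝ} (he : ‖e‖ ≤ ε) :
    ‖⟪w, h⟫_𝕜‖ - ε * ‖w‖ ≤ ‖⟪w, h + e⟫_𝕜‖ := by
  rw [inner_add_right]
  linarith [norm_sub_le_norm_add ⟪w, h⟫_𝕜 ⟪w, e⟫_𝕜, norm_inner_le_mul_of_norm_le (𝕜 := 𝕜) w he]

lemma sinr_constraint_of_conservative_of_norm_le {ι : Type*} [Fintype ι] [DecidableEq ι] (g : ι)
    (w : ι → E) (h e : E) {σ τ ε : ℝ} (hτ : 0 ≤ τ) (he : ‖e‖ ≤ ε)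
    (hcons : ε * ‖w g‖ + √τ * √((∑ l ∈ Finset.univ.erase g,
        (‖⟪w l, h⟫_𝕜‖ + ε * ‖w l‖) ^ 2) + σ ^ 2) ≤ ‖⟪w g, h⟫_𝕜‖) :
    τ * ((∑ l ∈ Finset.univ.erase g, ‖⟪w l, h + e⟫_𝕜‖ ^ 2) + σ ^ 2) ≤ ‖⟪w g, h + e⟫_𝕜‖ ^ 2 := by
  set S := (∑ l ∈ Finset.univ.erase g, (‖⟪w l, h⟫_𝕜‖ + ε * ‖w l‖) ^ 2) + σ ^ 2
  have hsignal : √τ * √S ≤ ‖⟪w g, h + e⟫_𝕜‖ := by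
    linarith [norm_inner_sub_le_norm_inner_add_of_norm_le (𝕜 := 𝕜) (w g) h he]
  have hinterference : (∑ l ∈ Finset.univ.erase g, ‖⟪w l, h + e⟫_𝕜‖ ^ 2) + σ ^ 2 ≤ S := by
    unfold S
    gcongr with l
    exact norm_inner_add_le_of_norm_le (w l) h he
  calc τ * ((∑ l ∈ Finset.univ.erase g, ‖⟪w l, h + e⟫_𝕜‖ ^ 2) + σ ^ 2)
      ≤ τ * S := by gcongr
    _ = (√τ * √S) ^ 2 := by rw [mul_pow, Real.sq_sqrt hτ, Real.sq_sqrt (by positivity)]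
    _ ≤ ‖⟪w g, h + e⟫_𝕜‖ ^ 2 := by gcongr

end RobustSINR

theorem stmt_0_general {M G : ℕ} (g : Fin G)
    (hhat : EuclideanSpace ℂ (Fin M)) (σ τ : ℝ) (hτ : 0 ≤ τ)
    (C : Matrix (Fin M) (Fin M) ℂ) (hC : C.PosDef)
    (ε : ℝ) (hε : ε = 1 / Real.sqrt (⨅ i, hC.isHermitian.eigenvalues i))
    (w : Fin G → EuclideanSpace ℂ (Fin M))
    (hcons : ε * ‖w g‖ +
        Real.sqrt τ * Real.sqrt ((∑ l ∈ Finset.univ.erase g,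
          (‖⟪w l, hhat⟫‖ + ε * ‖w l‖) ^ 2) + σ ^ 2)
        ≤ ‖⟪w g, hhat⟫‖) :
    ∀ e : EuclideanSpace ℂ (Fin M), (⟪e, Matrix.toEuclideanLin C e⟫).re ≤ 1 →
      τ * ((∑ l ∈ Finset.univ.erase g, ‖⟪w l, hhat + e⟫‖ ^ 2) + σ ^ 2)
        ≤ ‖⟪w g, hhat + e⟫‖ ^ 2 := by
  intro e he
  have hnorm : ‖e‖ ≤ ε := hε ▸ hC.norm_le_of_re_inner_toEuclideanLin_le_one he
  exact sinr_constraint_of_conservative_of_norm_le g w hhat e hτ hnorm hcons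

/-- If the conservative robust constraint
`ε‖w_g‖ + √τ·√(∑_{l≠g} (|w_lᴴĥ| + ε‖w_l‖)² + σ²) ≤ |w_gᴴĥ|` holds with
`ε = 1/√(λ_min C)`, then for every error `e` with `eᴴ C e ≤ 1` the SINR of the
user is at least `τ`, i.e. `|w_gᴴ(ĥ+e)|² ≥ τ·(∑_{l≠g} |w_lᴴ(ĥ+e)|² + σ²)`. -/
theorem stmt_0 {M G : ℕ} (hM : 1 ≤ M) (hG : 2 ≤ G) (g : Fin G)
    (hhat : EuclideanSpace ℂ (Fin M)) (σ τ : ℝ) (hσ : 0 < σ) (hτ : 0 ≤ τ)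
    (C : Matrix (Fin M) (Fin M) ℂ) (hC : C.PosDef)
    (ε : ℝ) (hε : ε = 1 / Real.sqrt (⨅ i, hC.isHermitian.eigenvalues i))
    (w : Fin G → EuclideanSpace ℂ (Fin M))
    (hcons : ε * ‖w g‖ +
        Real.sqrt τ * Real.sqrt ((∑ l ∈ Finset.univ.erase g,
          (‖⟪w l, hhat⟫‖ + ε * ‖w l‖) ^ 2) + σ ^ 2)
        ≤ ‖⟪w g, hhat⟫‖) :
    ∀ e : EuclideanSpace ℂ (Fin M), (⟪e, Matrix.toEuclideanLin C e⟫).re ≤ 1 →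
      τ * ((∑ l ∈ Finset.univ.erase g, ‖⟪w l, hhat + e⟫‖ ^ 2) + σ ^ 2)
        ≤ ‖⟪w g, hhat + e⟫‖ ^ 2 :=
  stmt_0_general g hhat σ τ hτ C hC ε hε w hcons
end

section
/- Let w, ĥ ∈ ℂ^M with w ≠ 0 and w^H ĥ ≠ 0, and let μ > 0. Define e = −μ · e^{i·arg(w^H ĥ)} · w / ‖w‖₂, where arg(w^H ĥ) is the argument of the complex number w^H ĥ. Then ‖e‖₂ = μ and |w^H (ĥ + e)| = | |w^H ĥ| − μ‖w‖₂ |; in particular, if |w^H ĥ| ≥ μ‖w‖₂, then |w^H (ĥ + e)| = |w^H ĥ| − μ‖w‖₂. -/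
open scoped ComplexInnerProductSpace

/-! The error `e` is a negative real multiple of `w` rotated by the phase `u = wᴴĥ / |wᴴĥ|`, so
`wᴴe = -μ‖w‖ u` is aligned against `wᴴĥ = |wᴴĥ| u`. Hence `wᴴ(ĥ + e) = u (|wᴴĥ| - μ‖w‖)`, whose
modulus is `||wᴴĥ| - μ‖w‖|` because `|u| = 1`; and `‖e‖ = μ |u| ‖w‖ / ‖w‖ = μ`. -/

lemma Complex.norm_div_ofReal_norm {z : ℂ} (hz : z ≠ 0) : ‖z / (‖z‖ : ℂ)‖ = 1 := by
  rw [norm_div, Complex.norm_real, norm_norm, div_self (norm_ne_zero_iff.mpr hz)]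

lemma Complex.div_ofReal_norm_mul (z : ℂ) : z / (‖z‖ : ℂ) * ‖z‖ = z := by
  rcases eq_or_ne z 0 with rfl | hz
  · simp
  · exact div_mul_cancel₀ z (Complex.ofReal_ne_zero.mpr (norm_ne_zero_iff.mpr hz))

section WorstCaseError

variable {E : Type*} [NormedAddCommGroup E] [InnerProductSpace ℂ E]

noncomputable def worstCaseError (μ : ℝ) (w h : E) : E :=
  (-(μ : ℂ) * (⟪w, h⟫ / (‖⟪w, h⟫‖ : ℂ)) / (‖w‖ : ℂ)) • w

lemma norm_worstCaseError {μ : ℝ} (hμ : 0 ≤ μ) {w h : E} (hw : w ≠ 0) (hwh : ⟪w, h⟫ ≠ 0) :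
    ‖worstCaseError μ w h‖ = μ := by
  have hw' : ‖w‖ ≠ 0 := norm_ne_zero_iff.mpr hw
  rw [worstCaseError, norm_smul, norm_div, norm_mul, norm_neg, Complex.norm_real,
    Complex.norm_div_ofReal_norm hwh, Complex.norm_real, norm_norm, Real.norm_of_nonneg hμ,
    mul_one, div_mul_cancel₀ μ hw']

lemma inner_add_worstCaseError (μ : ℝ) (w h : E) :
    ⟪w, h + worstCaseError μ w h⟫ = ⟪w, h⟫ / (‖⟪w, h⟫‖ : ℂ) * (‖⟪w, h⟫‖ - μ * ‖w‖) := by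
  have hww : -(μ : ℂ) / ‖w‖ * ⟪w, w⟫ = -μ * ‖w‖ := by
    rcases eq_or_ne w 0 with rfl | hw
    · simp
    have hw' : (‖w‖ : ℂ) ≠ 0 := Complex.ofReal_ne_zero.mpr (norm_ne_zero_iff.mpr hw)
    rw [show ⟪w, w⟫ = (‖w‖ : ℂ) ^ 2 from inner_self_eq_norm_sq_to_K w]
    field_simp
  calc ⟪w, h + worstCaseError μ w h⟫
      = ⟪w, h⟫ / (‖⟪w, h⟫‖ : ℂ) * ‖⟪w, h⟫‖
          + ⟪w, h⟫ / (‖⟪w, h⟫‖ : ℂ) * (-(μ : ℂ) / ‖w‖ * ⟪w, w⟫) := by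
        rw [Complex.div_ofReal_norm_mul, worstCaseError, inner_add_right, inner_smul_right]
        ring
    _ = _ := by rw [hww]; ring

lemma norm_inner_add_worstCaseError (μ : ℝ) {w h : E} (hwh : ⟪w, h⟫ ≠ 0) :
    ‖⟪w, h + worstCaseError μ w h⟫‖ = |‖⟪w, h⟫‖ - μ * ‖w‖| := by
  rw [inner_add_worstCaseError, norm_mul, Complex.norm_div_ofReal_norm hwh, one_mul,
    ← Complex.ofReal_mul, ← Complex.ofReal_sub, Complex.norm_real, Real.norm_eq_abs]

end WorstCaseError

/-- The error vector `e = −μ·e^{i·arg(wᴴĥ)}·w/‖w‖` has norm `μ` and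
achieves `|wᴴ(ĥ+e)| = | |wᴴĥ| − μ‖w‖ |`; in particular, if `|wᴴĥ| ≥ μ‖w‖` then
`|wᴴ(ĥ+e)| = |wᴴĥ| − μ‖w‖`. -/
theorem stmt_5 {M : ℕ} (w hhat : EuclideanSpace ℂ (Fin M)) (hw : w ≠ 0)
    (hwh : ⟪w, hhat⟫ ≠ 0) (μ : ℝ) (hμ : 0 < μ)
    (e : EuclideanSpace ℂ (Fin M))
    (he : e = (-(μ : ℂ) * (⟪w, hhat⟫ / (‖⟪w, hhat⟫‖ : ℂ)) / (‖w‖ : ℂ)) • w) :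
    ‖e‖ = μ ∧
    ‖⟪w, hhat + e⟫‖ = |‖⟪w, hhat⟫‖ - μ * ‖w‖| ∧
    (μ * ‖w‖ ≤ ‖⟪w, hhat⟫‖ →
      ‖⟪w, hhat + e⟫‖ = ‖⟪w, hhat⟫‖ - μ * ‖w‖) := by
  have he' : e = worstCaseError μ w hhat := he
  subst he'
  refine ⟨norm_worstCaseError hμ.le hw hwh, norm_inner_add_worstCaseError μ hwh, fun hle => ?_⟩
  rw [norm_inner_add_worstCaseError μ hwh, abs_of_nonneg (sub_nonneg.mpr hle)]
end

section
/- Let w, ĥ ∈ ℂ^M and μ > 0. Then the infimum of |w^H (ĥ + e)| over all e ∈ ℂ^M with ‖e‖₂ ≤ μ equals max( |w^H ĥ| − μ‖w‖₂, 0 ), and this infimum is attained. -/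
/-!
The map `e ↦ ⟪w, e⟫` sends the ball of radius `μ` onto the disc of radius `μ‖w‖`, so the
infimum is the distance from `⟪w, ĥ⟫` to that disc, attained at the radial projection.
-/

open scoped ComplexInnerProductSpace

theorem exists_norm_le_norm_add_eq_max {E : Type*} [NormedAddCommGroup E] [NormedSpace ℝ E]
    (a : E) {ρ : ℝ} (hρ : 0 ≤ ρ) : ∃ z : E, ‖z‖ ≤ ρ ∧ ‖a + z‖ = max (‖a‖ - ρ) 0 := by
  by_cases hle : ‖a‖ ≤ ρ
  · exact ⟨-a, by rwa [norm_neg], by simp [hle]⟩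
  · push Not at hle
    have ha : 0 < ‖a‖ := hρ.trans_lt hle
    refine ⟨-(ρ / ‖a‖) • a, ?_, ?_⟩
    · rw [norm_smul, norm_neg, Real.norm_of_nonneg (by positivity), div_mul_cancel₀ _ ha.ne']
    · have hcoef : 0 ≤ 1 - ρ / ‖a‖ := by rw [sub_nonneg, div_le_one ha]; exact hle.le
      calc ‖a + -(ρ / ‖a‖) • a‖ = ‖(1 - ρ / ‖a‖) • a‖ := by
            rw [sub_smul, one_smul, neg_smul, sub_eq_add_neg]
        _ = ‖a‖ - ρ := by
            rw [norm_smul, Real.norm_of_nonneg hcoef, sub_mul, one_mul,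
              div_mul_cancel₀ _ ha.ne']
        _ = max (‖a‖ - ρ) 0 := (max_eq_left (by linarith)).symm

section InnerProductSpace

variable {𝕜 E : Type*} [RCLike 𝕜] [NormedAddCommGroup E] [InnerProductSpace 𝕜 E]

theorem exists_norm_le_inner_eq (w : E) {μ : ℝ} (hμ : 0 ≤ μ) {z : 𝕜} (hz : ‖z‖ ≤ μ * ‖w‖) :
    ∃ e : E, ‖e‖ ≤ μ ∧ inner 𝕜 w e = z := by
  rcases eq_or_ne w 0 with rfl | hw
  · exact ⟨0, by simpa using hμ, by simpa [eq_comm] using hz⟩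
  · have hw' : 0 < ‖w‖ := norm_pos_iff.mpr hw
    refine ⟨(z / ((‖w‖ : 𝕜) ^ 2)) • w, ?_, ?_⟩
    · rw [norm_smul, norm_div, norm_pow, RCLike.norm_ofReal, abs_of_pos hw', sq,
        div_mul_eq_mul_div, mul_div_mul_right _ _ hw'.ne', div_le_iff₀ hw']
      exact hz
    · rw [inner_smul_right, inner_self_eq_norm_sq_to_K, div_mul_cancel₀]
      exact pow_ne_zero _ (RCLike.ofReal_ne_zero.mpr hw'.ne')

theorem norm_inner_sub_le_norm_inner_add (w h : E) {e : E} {μ : ℝ} (he : ‖e‖ ≤ μ) :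
    ‖inner 𝕜 w h‖ - μ * ‖w‖ ≤ ‖inner 𝕜 w (h + e)‖ := by
  have hwe : ‖inner 𝕜 w e‖ ≤ μ * ‖w‖ :=
    (norm_inner_le_norm w e).trans (by rw [mul_comm]; gcongr)
  rw [inner_add_right]
  have htri := norm_sub_le (inner 𝕜 w h + inner 𝕜 w e) (inner 𝕜 w e)
  rw [add_sub_cancel_right] at htri
  linarith

theorem isLeast_norm_inner_add (w h : E) {μ : ℝ} (hμ : 0 ≤ μ) :
    IsLeast {r : ℝ | ∃ e : E, ‖e‖ ≤ μ ∧ r = ‖inner 𝕜 w (h + e)‖}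
      (max (‖inner 𝕜 w h‖ - μ * ‖w‖) 0) := by
  constructor
  · obtain ⟨z, hz, hmax⟩ :=
      exists_norm_le_norm_add_eq_max (inner 𝕜 w h) (by positivity : 0 ≤ μ * ‖w‖)
    obtain ⟨e, he, rfl⟩ := exists_norm_le_inner_eq w hμ hz
    exact ⟨e, he, by rw [inner_add_right, hmax]⟩
  · rintro r ⟨e, he, rfl⟩
    exact max_le (norm_inner_sub_le_norm_inner_add w h he) (norm_nonneg _)

end InnerProductSpace

/-- The infimum of `|wᴴ(ĥ+e)|` over `‖e‖ ≤ μ` equals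
`max(|wᴴĥ| − μ‖w‖, 0)`, and it is attained. -/
theorem stmt_6 {M : ℕ} (w hhat : EuclideanSpace ℂ (Fin M)) (μ : ℝ) (hμ : 0 < μ) :
    IsLeast {r : ℝ | ∃ e : EuclideanSpace ℂ (Fin M), ‖e‖ ≤ μ ∧
        r = ‖⟪w, hhat + e⟫‖}
      (max (‖⟪w, hhat⟫‖ - μ * ‖w‖) 0) :=
  isLeast_norm_inner_add w hhat hμ.le
end

section
/- Let M ≥ 1 and G ≥ 1 be integers. Fix a group index g ∈ {1,…,G}, a channel estimate ĥ ∈ ℂ^M, a point u ∈ ℂ^M with u^H ĥ ≠ 0, real numbers ε ≥ 0, τ ≥ 0, σ ∈ ℝ. Then the function F : (ℂ^M)^G → ℝ defined by F(w_1,…,w_G) = ε‖w_g‖₂ + √τ · √( Σ_{l≠g} ( |w_l^H ĥ| + ε‖w_l‖₂ )² + σ² ) − Re( u^H ĥ · ĥ^H w_g ) / |u^H ĥ| is convex, where (ℂ^M)^G is regarded as a real vector space. In particular, the constraint set { (w_1,…,w_G) : F(w_1,…,w_G) ≤ s } is convex for every s ∈ ℝ. -/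
/-!
The first term is a norm composed with a linear map and the last term is real-linear. The middle
term is `√τ` times `√(∑ f_l² + σ²)`, where each `f_l = |w_lᴴĥ| + ε‖w_l‖` is convex and nonnegative;
`r ↦ √(∑ r_l² + σ²)` is the Euclidean norm of `(r, σ)`, hence convex, and it is monotone on the
nonnegative orthant, so the composition is convex.
-/

open scoped ComplexInnerProductSpace
open Set

lemma convexOn_sqrt_norm_sq_add_sq (F : Type*) [SeminormedAddCommGroup F] [NormedSpace ℝ F]
    (σ : ℝ) : ConvexOn ℝ univ fun x : F => √(‖x‖ ^ 2 + σ ^ 2) := by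
  have hnorm (x : F) : √(‖x‖ ^ 2 + σ ^ 2) = ‖WithLp.toLp 2 (x, σ)‖ := by
    simp [WithLp.prod_norm_eq_of_L2]
  refine ⟨convex_univ, fun x _ y _ a b ha hb hab => ?_⟩
  have hcomb : WithLp.toLp 2 (a • x + b • y, σ) =
      a • WithLp.toLp 2 (x, σ) + b • WithLp.toLp 2 (y, σ) := by
    rw [← WithLp.toLp_smul, ← WithLp.toLp_smul, ← WithLp.toLp_add]
    congr 1
    ext <;> simp [← add_mul, hab]
  simp only [hnorm, hcomb, smul_eq_mul]
  exact (convexOn_norm convex_univ).2 trivial trivial ha hb hab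

lemma convexOn_sqrt_sum_sq_add_sq {ι : Type*} (s : Finset ι) (σ : ℝ) :
    ConvexOn ℝ univ fun r : ι → ℝ => √(∑ i ∈ s, r i ^ 2 + σ ^ 2) := by
  let L : (ι → ℝ) →ₗ[ℝ] EuclideanSpace ℝ s :=
    (WithLp.linearEquiv 2 ℝ (s → ℝ)).symm.toLinearMap ∘ₗ LinearMap.funLeft ℝ ℝ Subtype.val
  have hL (r : ι → ℝ) : ‖L r‖ ^ 2 = ∑ i ∈ s, r i ^ 2 := by
    simp [L, EuclideanSpace.norm_sq_eq, Finset.sum_attach s (fun i => r i ^ 2)]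
  exact ((convexOn_sqrt_norm_sq_add_sq (EuclideanSpace ℝ s) σ).comp_linearMap L).congr
    fun r _ => by simp only [Function.comp, hL]

lemma ConvexOn.sqrt_sum_sq_add_sq {E ι : Type*} [AddCommGroup E] [Module ℝ E] {f : ι → E → ℝ}
    (s : Finset ι) (σ : ℝ) (hf : ∀ i ∈ s, ConvexOn ℝ univ (f i))
    (hf₀ : ∀ i ∈ s, ∀ x, 0 ≤ f i x) :
    ConvexOn ℝ univ fun x => √(∑ i ∈ s, f i x ^ 2 + σ ^ 2) := by
  refine ⟨convex_univ, fun x _ y _ a b ha hb hab => ?_⟩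
  calc √(∑ i ∈ s, f i (a • x + b • y) ^ 2 + σ ^ 2)
      ≤ √(∑ i ∈ s, (a • f i x + b • f i y) ^ 2 + σ ^ 2) := by
        gcongr with i hi
        · exact hf₀ i hi _
        · exact (hf i hi).2 trivial trivial ha hb hab
    _ ≤ a • √(∑ i ∈ s, f i x ^ 2 + σ ^ 2) + b • √(∑ i ∈ s, f i y ^ 2 + σ ^ 2) :=
        (convexOn_sqrt_sum_sq_add_sq s σ).2 (x := fun i => f i x) (y := fun i => f i y)
          trivial trivial ha hb hab

theorem stmt_11_general {M G : ℕ} (g : Fin G)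
    (hhat u : EuclideanSpace ℂ (Fin M))
    (ε τ σ : ℝ) (hε : 0 ≤ ε) :
    ConvexOn ℝ Set.univ
      (fun w : Fin G → EuclideanSpace ℂ (Fin M) =>
        ε * ‖w g‖ + Real.sqrt τ * Real.sqrt ((∑ l ∈ Finset.univ.erase g,
            (‖⟪w l, hhat⟫‖ + ε * ‖w l‖) ^ 2) + σ ^ 2)
          - (⟪u, hhat⟫ * ⟪hhat, w g⟫).re / ‖⟪u, hhat⟫‖) ∧
    ∀ s : ℝ, Convex ℝ {w : Fin G → EuclideanSpace ℂ (Fin M) |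
        ε * ‖w g‖ + Real.sqrt τ * Real.sqrt ((∑ l ∈ Finset.univ.erase g,
            (‖⟪w l, hhat⟫‖ + ε * ‖w l‖) ^ 2) + σ ^ 2)
          - (⟪u, hhat⟫ * ⟪hhat, w g⟫).re / ‖⟪u, hhat⟫‖ ≤ s} := by
  set c := ⟪u, hhat⟫
  let inner_hhat (l : Fin G) : (Fin G → EuclideanSpace ℂ (Fin M)) →ₗ[ℂ] ℂ :=
    innerₛₗ ℂ hhat ∘ₗ LinearMap.proj l
  have h_norm (l : Fin G) : ConvexOn ℝ univ fun w : Fin G → EuclideanSpace ℂ (Fin M) => ‖w l‖ :=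
    (convexOn_norm convex_univ).comp_linearMap
      (LinearMap.proj (R := ℝ) (φ := fun _ => EuclideanSpace ℂ (Fin M)) l)
  have h_norm_inner (l : Fin G) :
      ConvexOn ℝ univ fun w : Fin G → EuclideanSpace ℂ (Fin M) => ‖⟪w l, hhat⟫‖ :=
    ((convexOn_norm convex_univ).comp_linearMap ((inner_hhat l).restrictScalars ℝ)).congr
      fun w _ => by simp [inner_hhat, norm_inner_symm]
  have h_linear : ConcaveOn ℝ univ fun w : Fin G → EuclideanSpace ℂ (Fin M) =>
      (c * ⟪hhat, w g⟫).re / ‖c‖ :=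
    (‖c‖⁻¹ • (Complex.reLm ∘ₗ (c • inner_hhat g).restrictScalars ℝ)).concaveOn convex_univ
      |>.congr fun w _ => by simp [inner_hhat, div_eq_inv_mul]
  have h_sqrt := ConvexOn.sqrt_sum_sq_add_sq (Finset.univ.erase g) σ
    (fun l _ => (h_norm_inner l).add ((h_norm l).smul hε))
    (fun l _ w => add_nonneg (norm_nonneg _) (smul_nonneg hε (norm_nonneg _)))
  have hF := (((h_norm g).smul hε).add (h_sqrt.smul (Real.sqrt_nonneg τ))).sub h_linear
  exact ⟨hF, fun s => by simpa using hF.convex_le s⟩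

/-- The MM surrogate constraint function
`F(w) = ε‖w_g‖ + √τ·√(∑_{l≠g} (|w_lᴴĥ| + ε‖w_l‖)² + σ²) − Re(uᴴĥ·ĥᴴw_g)/|uᴴĥ|`
is convex on `(ℂ^M)^G` as a real vector space, and its sublevel sets are convex. -/
theorem stmt_11 {M G : ℕ} (hM : 1 ≤ M) (hG : 1 ≤ G) (g : Fin G)
    (hhat u : EuclideanSpace ℂ (Fin M)) (hu : ⟪u, hhat⟫ ≠ 0)
    (ε τ σ : ℝ) (hε : 0 ≤ ε) (hτ : 0 ≤ τ) :
    ConvexOn ℝ Set.univ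
      (fun w : Fin G → EuclideanSpace ℂ (Fin M) =>
        ε * ‖w g‖ + Real.sqrt τ * Real.sqrt ((∑ l ∈ Finset.univ.erase g,
            (‖⟪w l, hhat⟫‖ + ε * ‖w l‖) ^ 2) + σ ^ 2)
          - (⟪u, hhat⟫ * ⟪hhat, w g⟫).re / ‖⟪u, hhat⟫‖) ∧
    ∀ s : ℝ, Convex ℝ {w : Fin G → EuclideanSpace ℂ (Fin M) |
        ε * ‖w g‖ + Real.sqrt τ * Real.sqrt ((∑ l ∈ Finset.univ.erase g,
            (‖⟪w l, hhat⟫‖ + ε * ‖w l‖) ^ 2) + σ ^ 2)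
          - (⟪u, hhat⟫ * ⟪hhat, w g⟫).re / ‖⟪u, hhat⟫‖ ≤ s} :=
  stmt_11_general g hhat u ε τ σ hε
end
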